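/- Under Assumption A, let U : H → H be a contraction with constant κ ∈ [0, 1/2), let β ∈ (0, 1/4), r ∈ (β, (1−2β)/2), let {σ_n} be a sequence in (0,1) with lim_{n→∞} σ_n = 0, let {c_n} be a sequence in [0, ∞) with Σ_{n=1}^∞ c_n < ∞, and let δ_0, δ_1 > 0. Given arbitrary w_0, w_1 ∈ H, let {w_n} satisfy, for all n ≥ 1, the resolvent inclusion σ_n U w_n + (1−σ_n) w_n − δ_n T w_n − δ_{n−1}(1 − σ_n(1−2κ))(T w_n − T w_{n−1}) − w_{n+1} ∈ δ_n • S(w_{n+1}), where the step sizes δ_n obey the adaptive rule: δ_{n+1} = min{ r‖w_n − w_{n+1}‖ / ‖T w_n − T w_{n+1}‖, δ_n + c_n } if T w_n ≠ T w_{n+1}, and δ_{n+1} = δ_n + c_n otherwise. Then the sequence {w_n} is bounded. -/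

import Mathlib

/-! The adaptive step sizes are bounded below by `min δ₁ (r / L)` and grow at most by the summable
`c n`, so they converge to a positive limit; hence eventually
`δ n * ‖T (w (n+1)) - T (w n)‖ ≤ ρ * ‖w (n+1) - w n‖` for any fixed `ρ ∈ (r, 1/2)`.
For a solution `z`, monotonicity of `T + S` at `w (n+2)` and the contraction estimate for `U`
then show that the energy
`Γ n = ‖w (n+1) - z‖² - 2 δ n ⟪T (w (n+1)) - T (w n), w (n+1) - z⟫ + ‖w (n+1) - w n‖² / 2`
satisfies `Γ (n+1) ≤ (1 - tₙ) Γ n + tₙ M` with `tₙ = σ (n+1) (1 - 2κ)`, so it stays below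
`max (Γ N) M`, while it dominates `‖w (n+1) - z‖² / 2`. -/

open Filter Topology
open scoped RealInnerProductSpace Pointwise Classical

theorem exists_tendsto_of_le_add_of_summable {a c : ℕ → ℝ} {m : ℝ} (hm : ∀ n, m ≤ a n)
    (hc0 : ∀ n, 0 ≤ c n) (hc : Summable c) (ha : ∀ n, a (n + 1) ≤ a n + c n) :
    ∃ l, Tendsto a atTop (𝓝 l) := by
  set e : ℕ → ℝ := fun n => a n - ∑ i ∈ Finset.range n, c i
  have he_anti : Antitone e := antitone_nat_of_succ_le fun n => by
    simp only [e, Finset.sum_range_succ]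
    linarith [ha n]
  have he_bdd : BddBelow (Set.range e) := ⟨m - ∑' i, c i, by
    rintro _ ⟨n, rfl⟩
    linarith [hm n, hc.sum_le_tsum (Finset.range n) fun i _ => hc0 i]⟩
  refine ⟨(⨅ n, e n) + ∑' i, c i, ?_⟩
  have := (tendsto_atTop_ciInf he_anti he_bdd).add hc.hasSum.tendsto_sum_nat
  simpa [e] using this

theorem le_max_of_succ_le_convex_comb {Γ t : ℕ → ℝ} {M : ℝ} {N : ℕ}
    (ht : ∀ k ≥ N, t k ∈ Set.Icc (0 : ℝ) 1)
    (h : ∀ k ≥ N, Γ (k + 1) ≤ (1 - t k) * Γ k + t k * M) :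
    ∀ k ≥ N, Γ k ≤ max (Γ N) M := by
  intro k hk
  induction k, hk using Nat.le_induction with
  | base => exact le_max_left _ _
  | succ k hk ih =>
    obtain ⟨ht0, ht1⟩ := ht k hk
    calc Γ (k + 1) ≤ (1 - t k) * Γ k + t k * M := h k hk
      _ ≤ (1 - t k) * max (Γ N) M + t k * max (Γ N) M :=
        add_le_add (mul_le_mul_of_nonneg_left ih (by linarith))
          (mul_le_mul_of_nonneg_left (le_max_right _ _) ht0)
      _ = max (Γ N) M := by ring

section StepSize

variable {H : Type*} [NormedAddCommGroup H]

def IsAdaptiveStepSize (T : H → H) (r : ℝ) (c : ℕ → ℝ) (w : ℕ → H) (δ : ℕ → ℝ) : Prop :=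
  ∀ n, 1 ≤ n → δ (n + 1) =
    if T (w n) ≠ T (w (n + 1)) then
      min (r * ‖w n - w (n + 1)‖ / ‖T (w n) - T (w (n + 1))‖) (δ n + c n)
    else δ n + c n

variable {T : H → H} {r L : ℝ} {c δ : ℕ → ℝ} {w : ℕ → H}

namespace IsAdaptiveStepSize

theorem le_add (h : IsAdaptiveStepSize T r c w δ) {n : ℕ} (hn : 1 ≤ n) :
    δ (n + 1) ≤ δ n + c n := by
  rw [h n hn]
  split_ifs
  exacts [min_le_right _ _, le_rfl]

theorem mul_norm_sub_le (h : IsAdaptiveStepSize T r c w δ) (hr : 0 ≤ r) {n : ℕ} (hn : 1 ≤ n) :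
    δ (n + 1) * ‖T (w (n + 1)) - T (w n)‖ ≤ r * ‖w (n + 1) - w n‖ := by
  rw [norm_sub_rev (T _), norm_sub_rev (w _)]
  by_cases hT : T (w n) = T (w (n + 1))
  · rw [hT, sub_self, norm_zero, mul_zero]
    positivity
  · have hpos : 0 < ‖T (w n) - T (w (n + 1))‖ := norm_pos_iff.2 (sub_ne_zero.2 hT)
    rw [← le_div_iff₀ hpos, h n hn, if_pos hT]
    exact min_le_left _ _

theorem min_le (h : IsAdaptiveStepSize T r c w δ) (hL : 0 < L)
    (hTlip : ∀ a b : H, ‖T a - T b‖ ≤ L * ‖a - b‖) (hr : 0 ≤ r) (hc : ∀ n, 0 ≤ c n) :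
    ∀ n, 1 ≤ n → min (δ 1) (r / L) ≤ δ n := by
  intro n hn
  induction n, hn using Nat.le_induction with
  | base => exact min_le_left _ _
  | succ n hn ih =>
    have hgrow : min (δ 1) (r / L) ≤ δ n + c n := by linarith [hc n]
    rw [h n hn]
    split_ifs with hT
    · refine le_min ((min_le_right _ _).trans ?_) hgrow
      have hpos : 0 < ‖T (w n) - T (w (n + 1))‖ := norm_pos_iff.2 (sub_ne_zero.2 hT)
      rw [div_le_div_iff₀ hL hpos]
      nlinarith [hTlip (w n) (w (n + 1))]
    · exact hgrow

theorem exists_tendsto (h : IsAdaptiveStepSize T r c w δ) (hL : 0 < L)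
    (hTlip : ∀ a b : H, ‖T a - T b‖ ≤ L * ‖a - b‖) (hr : 0 < r) (hc : ∀ n, 0 ≤ c n)
    (hcsum : Summable fun n => c (n + 1)) (hδ1 : 0 < δ 1) :
    ∃ d, 0 < d ∧ Tendsto δ atTop (𝓝 d) := by
  have hlow : ∀ k, min (δ 1) (r / L) ≤ δ (k + 1) := fun k =>
    h.min_le hL hTlip hr.le hc (k + 1) (by omega)
  obtain ⟨d, hd⟩ := exists_tendsto_of_le_add_of_summable hlow (fun k => hc (k + 1)) hcsum
    fun k => h.le_add (by omega)
  have hmin : 0 < min (δ 1) (r / L) := lt_min hδ1 (div_pos hr hL)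
  exact ⟨d, hmin.trans_le (ge_of_tendsto' hd hlow), (tendsto_add_atTop_iff_nat 1).1 hd⟩

theorem eventually_mul_norm_sub_le (h : IsAdaptiveStepSize T r c w δ) (hL : 0 < L)
    (hTlip : ∀ a b : H, ‖T a - T b‖ ≤ L * ‖a - b‖) (hr : 0 < r) (hc : ∀ n, 0 ≤ c n)
    (hcsum : Summable fun n => c (n + 1)) (hδ1 : 0 < δ 1) {ρ : ℝ} (hρ : r < ρ) :
    ∀ᶠ n in atTop, 0 < δ n ∧ δ n * ‖T (w (n + 1)) - T (w n)‖ ≤ ρ * ‖w (n + 1) - w n‖ := by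
  obtain ⟨d, hd, hδ⟩ := h.exists_tendsto hL hTlip hr hc hcsum hδ1
  have hratio : ∀ᶠ n in atTop, r * δ n < ρ * δ (n + 1) := by
    have hlim : Tendsto (fun n => ρ * δ (n + 1) - r * δ n) atTop (𝓝 ((ρ - r) * d)) := by
      convert (((tendsto_add_atTop_iff_nat 1).2 hδ).const_mul ρ).sub (hδ.const_mul r) using 2
      ring
    filter_upwards [hlim.eventually_const_lt (mul_pos (sub_pos.2 hρ) hd)] with n hn
    linarith
  filter_upwards [hδ.eventually_const_lt hd, hratio, eventually_ge_atTop 1]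
    with n hpos hn hn1
  refine ⟨hpos, le_of_mul_le_mul_left ?_ hr⟩
  calc r * (δ n * ‖T (w (n + 1)) - T (w n)‖)
      ≤ ρ * (δ (n + 1) * ‖T (w (n + 1)) - T (w n)‖) := by
        rw [← mul_assoc, ← mul_assoc]
        exact mul_le_mul_of_nonneg_right hn.le (norm_nonneg _)
    _ ≤ ρ * (r * ‖w (n + 1) - w n‖) :=
        mul_le_mul_of_nonneg_left (h.mul_norm_sub_le hr.le hn1) (hr.trans hρ).le
    _ = r * (ρ * ‖w (n + 1) - w n‖) := by ring

end IsAdaptiveStepSize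

end StepSize

section Energy

variable {H : Type*} [NormedAddCommGroup H] [InnerProductSpace ℝ H]

theorem two_inner_sub_sub_eq (a b c : H) :
    2 * ⟪a - b, a - c⟫ = ‖a - b‖ ^ 2 + ‖a - c‖ ^ 2 - ‖b - c‖ ^ 2 := by
  have h := norm_sub_sq_real (a - c) (a - b)
  rw [sub_sub_sub_cancel_left, real_inner_comm] at h
  linarith

theorem two_inner_sub_le_of_norm_sub_le {U : H → H} {κ : ℝ} (hκ0 : 0 ≤ κ) (hκ1 : κ < 1)
    {v x z : H} (hU : ‖U v - U z‖ ≤ κ * ‖v - z‖) :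
    2 * ⟪U v - v, x - z⟫ ≤ ‖x - v‖ ^ 2 - (1 - κ) * ‖v - z‖ ^ 2 + ‖U z - z‖ ^ 2 / (1 - κ) := by
  have hsplit : U v - v = (U v - U z) + (U z - z) - (v - z) := by abel
  have hcontr : ⟪U v - U z, x - z⟫ ≤ κ * ‖v - z‖ * ‖x - z‖ :=
    (real_inner_le_norm _ _).trans (mul_le_mul_of_nonneg_right hU (norm_nonneg _))
  have hanchor : 2 * ⟪U z - z, x - z⟫ ≤ (1 - κ) * ‖x - z‖ ^ 2 + ‖U z - z‖ ^ 2 / (1 - κ) := by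
    have hκ : 0 < 1 - κ := by linarith
    have h := real_inner_le_norm (U z - z) (x - z)
    have hsq : 0 ≤ ((1 - κ) * ‖x - z‖ - ‖U z - z‖) ^ 2 / (1 - κ) := by positivity
    have hexp : ((1 - κ) * ‖x - z‖ - ‖U z - z‖) ^ 2 / (1 - κ)
        = (1 - κ) * ‖x - z‖ ^ 2 - 2 * (‖U z - z‖ * ‖x - z‖) + ‖U z - z‖ ^ 2 / (1 - κ) := by
      field_simp
      ring
    linarith
  have hvz : 2 * ⟪v - z, x - z⟫ = ‖v - z‖ ^ 2 + ‖x - z‖ ^ 2 - ‖x - v‖ ^ 2 := by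
    rw [← inner_neg_neg, neg_sub, neg_sub, two_inner_sub_sub_eq, norm_sub_rev z v,
      norm_sub_rev z x, norm_sub_rev v x]
  rw [hsplit, inner_sub_left, inner_add_left]
  linarith [mul_nonneg hκ0 (sq_nonneg (‖v - z‖ - ‖x - z‖))]

theorem inner_add_smul_nonneg_of_mem_smul {T : H → H} {S : H → Set H}
    (hTmono : ∀ a b : H, 0 ≤ ⟪T a - T b, a - b⟫)
    (hSmono : ∀ ⦃a b a' b' : H⦄, a' ∈ S a → b' ∈ S b → 0 ≤ ⟪a' - b', a - b⟫)
    {z : H} (hz : -T z ∈ S z) {δ : ℝ} (hδ : 0 ≤ δ) {x y : H} (hy : y - x ∈ δ • S x) :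
    0 ≤ ⟪y - x + δ • T x, x - z⟫ := by
  obtain ⟨s, hs, hsy⟩ := Set.mem_smul_set.mp hy
  have hsplit : y - x + δ • T x = δ • (s - -T z) + δ • (T x - T z) := by
    rw [← hsy]
    module
  rw [hsplit, inner_add_left, real_inner_smul_left, real_inner_smul_left]
  exact add_nonneg (mul_nonneg hδ (hSmono hs hz)) (mul_nonneg hδ (hTmono x z))

noncomputable def lyapunov (T : H → H) (z : H) (δ : ℝ) (u v : H) : ℝ :=
  ‖v - z‖ ^ 2 - 2 * δ * ⟪T v - T u, v - z⟫ + ‖v - u‖ ^ 2 / 2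

theorem sq_norm_sub_le_two_mul_lyapunov {T : H → H} {z u v : H} {δ ρ : ℝ} (hδ : 0 ≤ δ)
    (hρ : ρ ≤ 1 / 2) (hstep : δ * ‖T v - T u‖ ≤ ρ * ‖v - u‖) :
    ‖v - z‖ ^ 2 ≤ 2 * lyapunov T z δ u v := by
  have hinner : δ * ⟪T v - T u, v - z⟫ ≤ ρ * ‖v - u‖ * ‖v - z‖ :=
    calc δ * ⟪T v - T u, v - z⟫ ≤ δ * (‖T v - T u‖ * ‖v - z‖) :=
          mul_le_mul_of_nonneg_left (real_inner_le_norm _ _) hδ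
      _ ≤ ρ * ‖v - u‖ * ‖v - z‖ := by
          rw [← mul_assoc]
          exact mul_le_mul_of_nonneg_right hstep (norm_nonneg _)
  unfold lyapunov
  linarith [sq_nonneg (‖v - z‖ - ‖v - u‖),
    mul_nonneg (sub_nonneg.2 hρ) (mul_nonneg (norm_nonneg (v - u)) (norm_nonneg (v - z)))]

theorem lyapunov_succ_le {T U : H → H} {S : H → Set H}
    (hTmono : ∀ a b : H, 0 ≤ ⟪T a - T b, a - b⟫)
    (hSmono : ∀ ⦃a b a' b' : H⦄, a' ∈ S a → b' ∈ S b → 0 ≤ ⟪a' - b', a - b⟫)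
    {z : H} (hz : -T z ∈ S z) {κ σ ρ δ δ' : ℝ} {u v x : H} (hκ0 : 0 ≤ κ) (hκ : κ < 1 / 2)
    (hσ0 : 0 ≤ σ) (hσ : σ ≤ 1 / 2 - ρ) (hρ : 0 ≤ ρ) (hU : ‖U v - U z‖ ≤ κ * ‖v - z‖)
    (hδ : 0 ≤ δ) (hδ' : 0 ≤ δ') (hstep : δ' * ‖T v - T u‖ ≤ ρ * ‖v - u‖)
    (hx : σ • U v + (1 - σ) • v - δ • T v - (δ' * (1 - σ * (1 - 2 * κ))) • (T v - T u) - x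
      ∈ δ • S x) :
    lyapunov T z δ v x ≤ (1 - σ * (1 - 2 * κ)) * lyapunov T z δ' u v
      + σ * (1 - 2 * κ) * (‖U z - z‖ ^ 2 / ((1 - κ) * (1 - 2 * κ))) := by
  set ε := 1 - σ * (1 - 2 * κ)
  have hε1 : ε ≤ 1 := by nlinarith
  have hε0 : 0 ≤ ε := by nlinarith
  have hbasic := inner_add_smul_nonneg_of_mem_smul hTmono hSmono hz hδ hx
  have hsplit : σ • U v + (1 - σ) • v - δ • T v - (δ' * ε) • (T v - T u) - x + δ • T x
      = σ • (U v - v) - (x - v) + δ • (T x - T v) - (δ' * ε) • (T v - T u) := by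
    module
  have hxz : x - z = (v - z) + (x - v) := by abel
  rw [hsplit, inner_sub_left, inner_add_left, inner_sub_left, real_inner_smul_left,
    real_inner_smul_left, real_inner_smul_left, hxz, inner_add_right (T v - T u), ← hxz] at hbasic
  have hvisc := mul_le_mul_of_nonneg_left
    (two_inner_sub_le_of_norm_sub_le (x := x) hκ0 (by linarith) hU) hσ0
  have hthree := two_inner_sub_sub_eq x v z
  have hcross : δ' * ε * -⟪T v - T u, x - v⟫ ≤ ρ * ‖v - u‖ * ‖x - v‖ :=
    calc δ' * ε * -⟪T v - T u, x - v⟫ ≤ δ' * ε * (‖T v - T u‖ * ‖x - v‖) := by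
          gcongr
          exact (neg_le_abs _).trans (abs_real_inner_le_norm _ _)
      _ ≤ δ' * 1 * (‖T v - T u‖ * ‖x - v‖) := by gcongr
      _ ≤ ρ * ‖v - u‖ * ‖x - v‖ := by
          rw [mul_one, ← mul_assoc]
          exact mul_le_mul_of_nonneg_right hstep (norm_nonneg _)
  have hconst : σ * (1 - 2 * κ) * (‖U z - z‖ ^ 2 / ((1 - κ) * (1 - 2 * κ)))
      = σ * (‖U z - z‖ ^ 2 / (1 - κ)) := by
    have : 1 - 2 * κ ≠ 0 := by linarith
    field_simp
  rw [hconst]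
  unfold lyapunov
  -- The viscosity step gains `σ (1 - κ) ‖v - z‖²`, more than the contraction by `σ (1 - 2κ)`
  -- claimed; the reflected term is absorbed by the two `‖·‖² / 2` terms as `σ + ρ ≤ 1/2`, `2ρ ≤ ε`.
  linarith [mul_nonneg hρ (sq_nonneg (‖v - u‖ - ‖x - v‖)),
    mul_nonneg (mul_nonneg hσ0 hκ0) (sq_nonneg ‖v - z‖),
    mul_nonneg (by linarith : 0 ≤ 1 / 2 - ρ - σ) (sq_nonneg ‖x - v‖),
    mul_nonneg (by nlinarith : 0 ≤ ε - 2 * ρ) (sq_nonneg ‖v - u‖)]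

end Energy

theorem stmt10_general {H : Type*} [NormedAddCommGroup H] [InnerProductSpace ℝ H]
    (T : H → H) (L : ℝ) (hL : 0 < L)
    (hTmono : ∀ a b : H, 0 ≤ ⟪T a - T b, a - b⟫)
    (hTlip : ∀ a b : H, ‖T a - T b‖ ≤ L * ‖a - b‖)
    (S : H → Set H)
    (hSmono : ∀ ⦃a b a' b' : H⦄, a' ∈ S a → b' ∈ S b → 0 ≤ ⟪a' - b', a - b⟫)
    (hZ : {z : H | -T z ∈ S z}.Nonempty)
    (U : H → H) (κ : ℝ) (hκ0 : 0 ≤ κ) (hκ : κ < 1 / 2)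
    (hU : ∀ a b : H, ‖U a - U b‖ ≤ κ * ‖a - b‖)
    (β r : ℝ) (hβ : β ∈ Set.Ioo (0 : ℝ) (1 / 4)) (hrr : r ∈ Set.Ioo β ((1 - 2 * β) / 2))
    (σ : ℕ → ℝ) (hσ : ∀ n, σ n ∈ Set.Ioo (0 : ℝ) 1) (hσ0 : Tendsto σ atTop (𝓝 0))
    (c : ℕ → ℝ) (hc : ∀ n, 0 ≤ c n) (hcsum : Summable fun n => c (n + 1))
    (δ : ℕ → ℝ) (hδ1 : 0 < δ 1)
    (w : ℕ → H)
    (hrule : ∀ n, 1 ≤ n → δ (n + 1) =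
      if T (w n) ≠ T (w (n + 1)) then
        min (r * ‖w n - w (n + 1)‖ / ‖T (w n) - T (w (n + 1))‖) (δ n + c n)
      else δ n + c n)
    (hiter : ∀ n, 1 ≤ n →
      σ n • U (w n) + (1 - σ n) • w n - δ n • T (w n)
          - (δ (n - 1) * (1 - σ n * (1 - 2 * κ))) • (T (w n) - T (w (n - 1))) - w (n + 1)
        ∈ δ n • S (w (n + 1))) :
    ∃ C : ℝ, ∀ n, ‖w n‖ ≤ C := by
  obtain ⟨z, hz⟩ := hZ
  have hr : 0 < r := hβ.1.trans hrr.1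
  obtain ⟨ρ, hrρ, hρ⟩ : ∃ ρ, r < ρ ∧ ρ < 1 / 2 := exists_between (by linarith [hrr.2, hβ.1])
  have hσsmall : ∀ᶠ k in atTop, σ (k + 1) < 1 / 2 - ρ :=
    ((tendsto_add_atTop_iff_nat 1).2 hσ0).eventually_lt_const (by linarith)
  obtain ⟨N, hN⟩ := eventually_atTop.1
    ((IsAdaptiveStepSize.eventually_mul_norm_sub_le hrule hL hTlip hr hc hcsum hδ1 hrρ).and
      hσsmall)
  set M := ‖U z - z‖ ^ 2 / ((1 - κ) * (1 - 2 * κ))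
  set Γ : ℕ → ℝ := fun k => lyapunov T z (δ k) (w k) (w (k + 1))
  have hΓ : ∀ k ≥ N, Γ k ≤ max (Γ N) M := by
    refine le_max_of_succ_le_convex_comb (t := fun k => σ (k + 1) * (1 - 2 * κ))
      (fun k _ => ?_) fun k hk => ?_
    · obtain ⟨hσpos, hσlt⟩ := hσ (k + 1)
      constructor <;> nlinarith
    · have hx := hiter (k + 1) (by omega)
      rw [Nat.add_sub_cancel] at hx
      exact lyapunov_succ_le hTmono hSmono hz hκ0 hκ (hσ (k + 1)).1.le (hN k hk).2.le
        (hr.trans hrρ).le (hU _ _) (hN (k + 1) (by omega)).1.1.le (hN k hk).1.1.le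
        (hN k hk).1.2 hx
  have hbound : ∀ k ≥ N, ‖w (k + 1)‖ ≤ ‖z‖ + √(2 * max (Γ N) M) := fun k hk =>
    calc ‖w (k + 1)‖ ≤ ‖z‖ + ‖w (k + 1) - z‖ := norm_le_norm_add_norm_sub' _ _
      _ ≤ ‖z‖ + √(2 * max (Γ N) M) := by
        grw [← Real.abs_le_sqrt ((sq_norm_sub_le_two_mul_lyapunov (hN k hk).1.1.le hρ.le
          (hN k hk).1.2).trans (by linarith [hΓ k hk])), abs_norm]
  have hev : ∀ᶠ n in atTop, ‖w n‖ ≤ ‖z‖ + √(2 * max (Γ N) M) := by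
    filter_upwards [eventually_gt_atTop N] with n hn
    obtain ⟨k, rfl⟩ : ∃ k, n = k + 1 := ⟨n - 1, by omega⟩
    exact hbound k (by omega)
  obtain ⟨C, hC⟩ := (isBoundedUnder_of_eventually_le hev).bddAbove_range
  exact ⟨C, fun n => hC ⟨n, rfl⟩⟩

/-- Boundedness of the viscosity-type forward-reflected-backward splitting method (Lemma 5.2). -/
theorem stmt10 {H : Type*} [NormedAddCommGroup H] [InnerProductSpace ℝ H] [CompleteSpace H]
    (T : H → H) (L : ℝ) (hL : 0 < L)
    (hTmono : ∀ a b : H, 0 ≤ ⟪T a - T b, a - b⟫)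
    (hTlip : ∀ a b : H, ‖T a - T b‖ ≤ L * ‖a - b‖)
    (S : H → Set H)
    (hSmono : ∀ ⦃a b a' b' : H⦄, a' ∈ S a → b' ∈ S b → 0 ≤ ⟪a' - b', a - b⟫)
    (hSmax : ∀ a a' : H, (∀ b b', b' ∈ S b → 0 ≤ ⟪a' - b', a - b⟫) → a' ∈ S a)
    (hZ : {z : H | -T z ∈ S z}.Nonempty)
    (U : H → H) (κ : ℝ) (hκ0 : 0 ≤ κ) (hκ : κ < 1 / 2)
    (hU : ∀ a b : H, ‖U a - U b‖ ≤ κ * ‖a - b‖)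
    (β r : ℝ) (hβ : β ∈ Set.Ioo (0 : ℝ) (1 / 4)) (hrr : r ∈ Set.Ioo β ((1 - 2 * β) / 2))
    (σ : ℕ → ℝ) (hσ : ∀ n, σ n ∈ Set.Ioo (0 : ℝ) 1) (hσ0 : Tendsto σ atTop (𝓝 0))
    (c : ℕ → ℝ) (hc : ∀ n, 0 ≤ c n) (hcsum : Summable fun n => c (n + 1))
    (δ : ℕ → ℝ) (hδ0 : 0 < δ 0) (hδ1 : 0 < δ 1)
    (w : ℕ → H)
    (hrule : ∀ n, 1 ≤ n → δ (n + 1) =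
      if T (w n) ≠ T (w (n + 1)) then
        min (r * ‖w n - w (n + 1)‖ / ‖T (w n) - T (w (n + 1))‖) (δ n + c n)
      else δ n + c n)
    (hiter : ∀ n, 1 ≤ n →
      σ n • U (w n) + (1 - σ n) • w n - δ n • T (w n)
          - (δ (n - 1) * (1 - σ n * (1 - 2 * κ))) • (T (w n) - T (w (n - 1))) - w (n + 1)
        ∈ δ n • S (w (n + 1))) :
    ∃ C : ℝ, ∀ n, ‖w n‖ ≤ C :=
  stmt10_general T L hL hTmono hTlip S hSmono hZ U κ hκ0 hκ hU β r hβ hrr σ hσ hσ0 c hc hcsum δ hδ1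
    w hrule hiter
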